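/- arXiv:2504.12242 — 3 statements merged into one kernel-verified Lean document; each statement's English description precedes it below -/
import Mathlib

section
/- Let p be an odd prime and d an integer with p ∤ d such that the Legendre symbol (d/p) equals −1. Then in ℤ[√d][X] the polynomial P(x) = ∏_{1 ≤ m,n ≤ p-1, p ∤ m²−dn²} (x − (m + n√d)) satisfies P(x) ≡ ∑_{k=0}^{(p−1)/2} x^{2k(p−1)} (mod p). (Note that when (d/p) = −1 the condition p ∤ m²−dn² is automatic for 1 ≤ m,n ≤ p−1, and ∑_{k=0}^{(p−1)/2} x^{2k(p−1)} = (x^{p²−1} − 1)/(x^{2(p−1)} − 1).) -/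
open Polynomial Finset

section aux

variable {p : ℕ} [Fact p.Prime]

lemma prod_univ_zmod :
    ∏ a : ZMod p, (X - C a) = X ^ p - X := by
  have hp : 1 < p := (Fact.out : p.Prime).one_lt
  have hcard : Fintype.card (ZMod p) = p := ZMod.card p
  have hroots : (X ^ p - X : (ZMod p)[X]).roots = Finset.univ.val := by
    have := FiniteField.roots_X_pow_card_sub_X (ZMod p)
    rwa [hcard] at this
  have hmonic : (X ^ p - X : (ZMod p)[X]).Monic :=
    monic_X_pow_sub (by simpa using (Nat.cast_lt (α := WithBot ℕ)).mpr hp)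
  have hdeg : (X ^ p - X : (ZMod p)[X]).natDegree = p :=
    FiniteField.X_pow_card_sub_X_natDegree_eq (ZMod p) hp
  have := prod_multiset_X_sub_C_of_monic_of_roots_card_eq hmonic
    (by rw [hroots, hdeg]; simpa using hcard)
  rw [hroots] at this
  rw [← this]
  rfl

lemma base_lemma :
    ∏ m ∈ Finset.Icc (1 : ℤ) ((p : ℤ) - 1), (X - C ((m : ZMod p))) = X ^ (p - 1) - 1 := by
  have hp : 1 < p := (Fact.out : p.Prime).one_lt
  have key : ∏ a ∈ (Finset.univ.erase (0 : ZMod p)), (X - C a)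
      = ∏ m ∈ Finset.Icc (1 : ℤ) ((p : ℤ) - 1), (X - C ((m : ZMod p))) := by
    refine Finset.prod_bij' (fun a _ => ((a.val : ℤ))) (fun m _ => ((m : ZMod p))) ?_ ?_ ?_ ?_ ?_
    · intro a ha
      rw [Finset.mem_erase] at ha
      have h1 : a.val ≠ 0 := fun h => ha.1 (by rwa [ZMod.val_eq_zero] at h)
      have h2 : a.val < p := ZMod.val_lt a
      rw [Finset.mem_Icc]
      omega
    · intro m hm
      rw [Finset.mem_Icc] at hm
      rw [Finset.mem_erase]
      refine ⟨?_, Finset.mem_univ _⟩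
      intro h
      rw [ZMod.intCast_zmod_eq_zero_iff_dvd] at h
      have := Int.le_of_dvd (by omega) h
      omega
    · intro a _
      simp [ZMod.natCast_val, ZMod.intCast_cast, ZMod.cast_id]
    · intro m hm
      rw [Finset.mem_Icc] at hm
      have := ZMod.val_intCast (n := p) m
      have hmod : m % (p : ℤ) = m := Int.emod_eq_of_lt (by omega) (by omega)
      omega
    · intro a _
      simp [ZMod.natCast_val, ZMod.intCast_cast, ZMod.cast_id]
  rw [← key]
  have hX : (X : (ZMod p)[X]) ≠ 0 := X_ne_zero
  apply mul_left_cancel₀ hX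
  have : (X : (ZMod p)[X]) * ∏ a ∈ (Finset.univ.erase (0 : ZMod p)), (X - C a)
      = ∏ a : ZMod p, (X - C a) := by
    rw [← Finset.mul_prod_erase Finset.univ _ (Finset.mem_univ (0 : ZMod p))]
    simp
  rw [this, prod_univ_zmod]
  have h1 : p - 1 + 1 = p := by omega
  rw [mul_sub, mul_one, ← pow_succ', h1]


lemma card_Icc_int : (Finset.Icc (1 : ℤ) ((p : ℤ) - 1)).card = p - 1 := by
  have hp : 1 < p := (Fact.out : p.Prime).one_lt
  rw [Int.card_Icc]
  omega

lemma key_lemma {T : Type*} [CommRing T] [CharP T p] (u v : T) (huv : u * v = 1)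
    (Y : T[X]) :
    ∏ m ∈ Finset.Icc (1 : ℤ) ((p : ℤ) - 1), (Y - C ((m : T) * u))
      = Y ^ (p - 1) - C (u ^ (p - 1)) := by
  let ψ : ZMod p →+* T := ZMod.castHom dvd_rfl T
  let φ : (ZMod p)[X] →+* T[X] := eval₂RingHom ((C : T →+* T[X]).comp ψ) (C v * Y)
  have h := congrArg φ (base_lemma (p := p))
  simp only [map_prod, map_sub, map_pow, map_one, coe_eval₂RingHom, eval₂_X, eval₂_C,
    RingHom.coe_comp, Function.comp_apply, φ] at h
  have hψ : ∀ m : ℤ, ψ ((m : ZMod p)) = (m : T) := fun m => map_intCast ψ m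
  simp only [hψ] at h
  have h3 : ∀ m ∈ Finset.Icc (1 : ℤ) ((p : ℤ) - 1),
      Y - C ((m : T) * u) = C u * (C v * Y - C ((m : T))) := by
    intro m _
    rw [mul_sub, ← mul_assoc, ← C_mul, huv, C_1, one_mul, ← C_mul, mul_comm u]
  calc ∏ m ∈ Finset.Icc (1 : ℤ) ((p : ℤ) - 1), (Y - C ((m : T) * u))
      = ∏ m ∈ Finset.Icc (1 : ℤ) ((p : ℤ) - 1), (C u * (C v * Y - C ((m : T)))) :=
        Finset.prod_congr rfl h3
    _ = (∏ _m ∈ Finset.Icc (1 : ℤ) ((p : ℤ) - 1), C u)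
        * ∏ m ∈ Finset.Icc (1 : ℤ) ((p : ℤ) - 1), (C v * Y - C ((m : T))) :=
        Finset.prod_mul_distrib
    _ = (C u) ^ (p - 1) * ((C v * Y) ^ (p - 1) - 1) := by
        rw [Finset.prod_const, card_Icc_int, h]
    _ = Y ^ (p - 1) - C (u ^ (p - 1)) := by
        rw [mul_sub, mul_one, mul_pow, ← mul_assoc, ← mul_pow, ← C_mul, huv, C_1, one_pow,
          one_mul, ← C_pow]

end aux
set_option maxHeartbeats 1000000 in
theorem stmt_2 (p : ℕ) [Fact p.Prime] (hodd : Odd p) (d : ℤ) (hd : ¬ (p : ℤ) ∣ d)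
    (hleg : legendreSym p d = -1) :
    (p : (Zsqrtd d)[X]) ∣
      (∏ mn ∈ (Finset.Icc (1 : ℤ) ((p : ℤ) - 1) ×ˢ Finset.Icc (1 : ℤ) ((p : ℤ) - 1)).filter
          (fun mn => ¬ (p : ℤ) ∣ (mn.1 ^ 2 - d * mn.2 ^ 2)),
        (X - C (⟨mn.1, mn.2⟩ : Zsqrtd d)))
      - ∑ k ∈ Finset.range ((p - 1) / 2 + 1), X ^ (2 * k * (p - 1)) := by
  have hp : 1 < p := (Fact.out : p.Prime).one_lt
  obtain ⟨q0, hq0⟩ := hodd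
  -- the quotient ring
  set I : Ideal (Zsqrtd d) := Ideal.span {((p : ℤ) : Zsqrtd d)} with hIdef
  let π : Zsqrtd d →+* (Zsqrtd d ⧸ I) := Ideal.Quotient.mk I
  haveI hchar : CharP (Zsqrtd d ⧸ I) p := by
    constructor
    intro n
    rw [← map_natCast π n, Ideal.Quotient.eq_zero_iff_mem, hIdef, Ideal.mem_span_singleton,
      show ((n : ℕ) : Zsqrtd d) = ((n : ℤ) : Zsqrtd d) by push_cast; rfl,
      Zsqrtd.intCast_dvd_intCast, Int.natCast_dvd_natCast]
  -- remove the filter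
  have hfilter : ∀ mn ∈ Finset.Icc (1 : ℤ) ((p : ℤ) - 1) ×ˢ Finset.Icc (1 : ℤ) ((p : ℤ) - 1),
      ¬ (p : ℤ) ∣ (mn.1 ^ 2 - d * mn.2 ^ 2) := by
    rintro ⟨m, n⟩ hmn hdvd
    rw [Finset.mem_product, Finset.mem_Icc, Finset.mem_Icc] at hmn
    have hn0 : ((n : ZMod p)) ≠ 0 := by
      intro h0
      rw [ZMod.intCast_zmod_eq_zero_iff_dvd] at h0
      have := Int.le_of_dvd (by omega) h0
      omega
    have heq : ((m : ZMod p)) ^ 2 = (d : ZMod p) * (n : ZMod p) ^ 2 := by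
      have h0 := (ZMod.intCast_zmod_eq_zero_iff_dvd _ p).mpr hdvd
      push_cast at h0
      rw [sub_eq_zero] at h0
      exact h0
    apply (legendreSym.eq_neg_one_iff p).mp hleg
    refine ⟨(m : ZMod p) * ((n : ZMod p))⁻¹, ?_⟩
    field_simp
    linear_combination (-1 : ZMod p) * heq
  -- reduce to an identity in the quotient
  suffices h : Polynomial.map π
      ((∏ mn ∈ (Finset.Icc (1 : ℤ) ((p : ℤ) - 1) ×ˢ Finset.Icc (1 : ℤ) ((p : ℤ) - 1)).filter
          (fun mn => ¬ (p : ℤ) ∣ (mn.1 ^ 2 - d * mn.2 ^ 2)),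
        (X - C (⟨mn.1, mn.2⟩ : Zsqrtd d)))
      - ∑ k ∈ Finset.range ((p - 1) / 2 + 1), X ^ (2 * k * (p - 1))) = 0 by
    rw [← map_natCast (C : Zsqrtd d →+* (Zsqrtd d)[X]) p, C_dvd_iff_dvd_coeff]
    intro i
    have hc := congrArg (fun g => g.coeff i) h
    simp only [coeff_map, coeff_zero] at hc
    rw [Ideal.Quotient.eq_zero_iff_mem, hIdef, Ideal.mem_span_singleton] at hc
    rwa [show ((p : ℕ) : Zsqrtd d) = ((p : ℤ) : Zsqrtd d) by push_cast; rfl]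
  rw [Finset.filter_true_of_mem hfilter, Polynomial.map_sub, Polynomial.map_prod,
    Polynomial.map_sum, sub_eq_zero]
  simp only [Polynomial.map_sub, Polynomial.map_pow, Polynomial.map_X, Polynomial.map_C]
  -- now an identity in (Zsqrtd d ⧸ I)[X]
  set R := Zsqrtd d ⧸ I
  let ψ : ZMod p →+* R := ZMod.castHom (dvd_refl p) R
  set s : R := π Zsqrtd.sqrtd with hs_def
  have hs2 : s * s = ((d : ℤ) : R) := by
    rw [hs_def, ← map_mul, Zsqrtd.dmuld, map_intCast]
  have hdR : (((d : ℤ) : R)) ^ (p / 2) = -1 := by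
    have h1 : ((d : ZMod p)) ^ (p / 2) = -1 := by
      have := (legendreSym.eq_pow p d).symm
      rw [hleg] at this
      push_cast at this
      exact this
    have h4 := congrArg ψ h1
    simp only [map_pow, map_intCast, map_neg, map_one] at h4
    exact h4
  have hs_pow : s ^ (p - 1) = -1 := by
    have h1 : p - 1 = 2 * (p / 2) := by omega
    rw [h1, pow_mul, sq, hs2, hdR]
  have hs_p : s ^ p = -s := by
    rw [show p = (p - 1) + 1 by omega, pow_succ, hs_pow, neg_one_mul]
  have hπmn : ∀ m n : ℤ, π ⟨m, n⟩ = ((m : R) + (n : R) * s) := by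
    intro m n
    rw [Zsqrtd.decompose, map_add, map_mul, map_intCast, map_intCast, mul_comm]
  -- inverse of s
  have hcop : IsCoprime ((p : ℤ)) d :=
    (Int.prime_iff_natAbs_prime.mpr (by simpa using (Fact.out : p.Prime))).coprime_iff_not_dvd.mpr hd
  obtain ⟨a, b, hab⟩ := hcop
  have hbd : ((b : R)) * ((d : ℤ) : R) = 1 := by
    have := congrArg (Int.castRingHom R) hab
    simp only [map_add, map_mul, map_natCast, eq_intCast, map_one] at this
    rw [show ((p : ℕ) : R) = 0 from CharP.cast_eq_zero R p] at this
    simpa using this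
  have hst : s * ((b : R) * s) = 1 := by
    rw [show s * ((b : R) * s) = (b : R) * (s * s) by ring, hs2, hbd]
  -- rewrite the double product
  rw [Finset.prod_product_right]
  have hinner : ∀ n : ℤ, ∏ m ∈ Finset.Icc (1 : ℤ) ((p : ℤ) - 1),
      (X - C (π ⟨m, n⟩)) = (X - C ((n : R) * s)) ^ (p - 1) - 1 := by
    intro n
    have h1 : ∀ m ∈ Finset.Icc (1 : ℤ) ((p : ℤ) - 1),
        (X - C (π ⟨m, n⟩)) = ((X - C ((n : R) * s)) - C ((m : R) * 1)) := by
      intro m _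
      rw [hπmn, C_add, mul_one]
      ring
    rw [Finset.prod_congr rfl h1, key_lemma (p := p) (1 : R) 1 (mul_one 1), one_pow, C_1]
  simp only [hinner]
  -- multiply by A := ∏ (X - C (n * s)) = X^(p-1) + 1
  have hA : ∏ n ∈ Finset.Icc (1 : ℤ) ((p : ℤ) - 1), (X - C ((n : R) * s))
      = X ^ (p - 1) + 1 := by
    have h1 : ∀ n ∈ Finset.Icc (1 : ℤ) ((p : ℤ) - 1),
        (X - C ((n : R) * s)) = (X - C ((n : R) * s)) := fun _ _ => rfl
    rw [key_lemma (p := p) s ((b : R) * s) hst X, hs_pow, map_neg, C_1, sub_neg_eq_add]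
  -- A * LHS
  have hAL : (X ^ (p - 1) + 1) * (∏ n ∈ Finset.Icc (1 : ℤ) ((p : ℤ) - 1),
        ((X - C ((n : R) * s)) ^ (p - 1) - 1))
      = (X ^ p - X) ^ (p - 1) + 1 := by
    rw [← hA, ← Finset.prod_mul_distrib]
    have step : ∀ n ∈ Finset.Icc (1 : ℤ) ((p : ℤ) - 1),
        (X - C ((n : R) * s)) * ((X - C ((n : R) * s)) ^ (p - 1) - 1)
          = ((X ^ p - X) - C ((n : R) * (-(2 * s)))) := by
      intro n _
      have e1 : (X - C ((n : R) * s)) * ((X - C ((n : R) * s)) ^ (p - 1) - 1)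
          = (X - C ((n : R) * s)) ^ p - (X - C ((n : R) * s)) := by
        rw [mul_sub, mul_one, ← pow_succ', show p - 1 + 1 = p by omega]
      have e2 : (X - C ((n : R) * s)) ^ p = X ^ p - (C ((n : R) * s)) ^ p :=
        sub_pow_char _ _
      have e3 : ((n : R)) ^ p = (n : R) := by
        have h5 := congrArg ψ (ZMod.pow_card ((n : ZMod p)))
        simp only [map_pow, map_intCast] at h5
        exact h5
      rw [e1, e2, ← C_pow, mul_pow, e3, hs_p]
      simp only [map_neg, map_mul, mul_neg, map_ofNat]
      push_cast
      ring
    rw [Finset.prod_congr rfl step]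
    have hc2 : ((2 : R)) * (((p + 1) / 2 : ℕ) : R) = 1 := by
      have h6 : ((2 * ((p + 1) / 2) : ℕ) : R) = ((p : ℕ) : R) + 1 := by
        rw [show (2 * ((p + 1) / 2) : ℕ) = p + 1 by omega]
        push_cast
        ring
      rw [CharP.cast_eq_zero R p, zero_add] at h6
      rw [← h6]
      rw [Nat.cast_mul, Nat.cast_ofNat]
    have huv2 : (-(2 * s)) * (-((((p + 1) / 2 : ℕ) : R) * ((b : R) * s))) = 1 := by
      rw [show (-(2 * s)) * (-((((p + 1) / 2 : ℕ) : R) * ((b : R) * s)))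
          = ((2 : R) * (((p + 1) / 2 : ℕ) : R)) * (s * ((b : R) * s)) by ring, hc2, hst, one_mul]
    rw [key_lemma (p := p) (-(2 * s)) _ huv2 (X ^ p - X)]
    have h2ne : ((2 : ZMod p)) ≠ 0 := by
      intro h7
      rw [show (2 : ZMod p) = ((2 : ℕ) : ZMod p) by norm_cast,
        ZMod.natCast_eq_zero_iff] at h7
      have := Nat.le_of_dvd (by norm_num) h7
      omega
    have h2pow : ((2 : R)) ^ (p - 1) = 1 := by
      have h8 := congrArg ψ (ZMod.pow_card_sub_one_eq_one h2ne)
      simp only [map_pow, map_one, map_ofNat] at h8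
      exact h8
    have hneg : ((-1 : R)) ^ (p - 1) = 1 :=
      Even.neg_one_pow ⟨q0, by omega⟩
    have hfinal : (-(2 * s)) ^ (p - 1) = -1 := by
      rw [show (-(2 * s)) = (-1) * 2 * s by ring, mul_pow, mul_pow, hneg, h2pow, one_mul,
        one_mul, hs_pow]
    rw [hfinal, map_neg, C_1, sub_neg_eq_add]
  -- final cancellation
  set M : R[X] := (X ^ (p - 1) + 1) * (X ^ p - X) with hMdef
  have hM : M.Monic := by
    apply Polynomial.Monic.mul
    · exact monic_X_pow_add (lt_of_le_of_lt degree_one_le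
        (by exact_mod_cast Nat.cast_pos.mpr (show 0 < p - 1 by omega)))
    · exact monic_X_pow_sub (lt_of_le_of_lt degree_X_le (by exact_mod_cast hp))
  apply hM.isRegular.left
  show M * _ = M * _
  have hML : M * (∏ n ∈ Finset.Icc (1 : ℤ) ((p : ℤ) - 1),
      ((X - C ((n : R) * s)) ^ (p - 1) - 1)) = X ^ (p * p) - X := by
    calc M * (∏ n ∈ Finset.Icc (1 : ℤ) ((p : ℤ) - 1),
        ((X - C ((n : R) * s)) ^ (p - 1) - 1))
        = (X ^ p - X) * ((X ^ (p - 1) + 1) * (∏ n ∈ Finset.Icc (1 : ℤ) ((p : ℤ) - 1),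
          ((X - C ((n : R) * s)) ^ (p - 1) - 1))) := by rw [hMdef]; ring
      _ = (X ^ p - X) * ((X ^ p - X) ^ (p - 1) + 1) := by rw [hAL]
      _ = (X ^ p - X) ^ p + (X ^ p - X) := by
          rw [mul_add, mul_one, ← pow_succ', show p - 1 + 1 = p by omega]
      _ = X ^ (p * p) - X := by
          rw [sub_pow_char, ← pow_mul]
          ring
  have hexp : 2 * (p - 1) * ((p - 1) / 2 + 1) = p * p - 1 := by
    have h9 : p - 1 = 2 * q0 := by omega
    have h10 : (p - 1) / 2 = q0 := by omega
    rw [h10, h9, hq0]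
    have h11 : (2 * q0 + 1) * (2 * q0 + 1) = 4 * (q0 * q0) + 4 * q0 + 1 := by ring
    have h12 : 2 * (2 * q0) * (q0 + 1) = 4 * (q0 * q0) + 4 * q0 := by ring
    omega
  have hSum : ∑ k ∈ Finset.range ((p - 1) / 2 + 1), (X : R[X]) ^ (2 * k * (p - 1))
      = ∑ k ∈ Finset.range ((p - 1) / 2 + 1), ((X : R[X]) ^ (2 * (p - 1))) ^ k := by
    refine Finset.sum_congr rfl fun k _ => ?_
    rw [← pow_mul]
    congr 1
    ring
  have hM2 : M = X * (X ^ (2 * (p - 1)) - 1) := by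
    rw [hMdef, show (X ^ p - X : R[X]) = X * (X ^ (p - 1) - 1) by
        rw [mul_sub, mul_one, ← pow_succ', show p - 1 + 1 = p by omega],
      show 2 * (p - 1) = (p - 1) * 2 by ring, pow_mul]
    ring
  have hMS : M * (∑ k ∈ Finset.range ((p - 1) / 2 + 1), (X : R[X]) ^ (2 * k * (p - 1)))
      = X ^ (p * p) - X := by
    have hpp : 1 ≤ p * p := Nat.one_le_iff_ne_zero.mpr (by positivity)
    rw [hSum, hM2, mul_assoc, mul_comm (X ^ (2 * (p - 1)) - 1), geom_sum_mul, ← pow_mul, hexp,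
      mul_sub, mul_one, ← pow_succ', show p * p - 1 + 1 = p * p by omega]
  rw [hML, hMS]
end

section
/- Let p be an odd prime and d an integer with p ∤ d such that the Legendre symbol (d/p) equals −1. Then in ℤ[√d][X] one has (x^{p−1} − 1) · ∏_{m=1}^{p−1} ∏_{n=1}^{p−1} (x − (m + n√d)) ≡ (x^p + x)^{p−1} − 1 (mod p). -/
open Polynomial Finset

/-!
Since `d` is a non-residue, a square root `s` of `d` in an algebraic closure of `𝔽_p` is not in
`𝔽_p` and satisfies `s ^ p = s * d ^ ((p - 1) / 2) = -s` (Euler's criterion). Hence the lift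
`ℤ[√d] → 𝔽̄_p`, `√d ↦ s`, kills only multiples of `p`, and it suffices to prove the identity
over `𝔽̄_p`. There the `b * s`, `b ∈ 𝔽_p`, are the roots of `X ^ p + X`, so for each `a`
`∏_{b ∈ 𝔽_p} (X - a - b s) = (X - a) ^ p + (X - a) = X ^ p + X - 2 a`. The factor `X ^ (p - 1) - 1`
supplies the missing terms `b = 0`, and as `a` runs over `𝔽_pˣ` so does `2 a`, leaving
`∏_{c ≠ 0} (Y - c) = Y ^ (p - 1) - 1` with `Y = X ^ p + X`.
-/

theorem FiniteField.prod_univ_X_sub_C (F : Type*) [Field F] [Fintype F] :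
    ∏ a : F, (X - C a) = X ^ Fintype.card F - X := by
  have hq : 1 < Fintype.card F := Fintype.one_lt_card
  have hmonic : (X ^ Fintype.card F - X : F[X]).Monic :=
    monic_X_pow_sub (degree_X_le.trans_lt (by exact_mod_cast hq))
  have hcard : Multiset.card (X ^ Fintype.card F - X : F[X]).roots =
      (X ^ Fintype.card F - X : F[X]).natDegree := by
    rw [roots_X_pow_card_sub_X, X_pow_card_sub_X_natDegree_eq F hq]; rfl
  rw [← prod_multiset_X_sub_C_of_monic_of_roots_card_eq hmonic hcard, roots_X_pow_card_sub_X]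
  rfl

namespace ZMod

theorem prod_Icc_intCast {p : ℕ} [NeZero p] {M : Type*} [CommMonoid M] (f : ZMod p → M) :
    ∏ m ∈ Icc (1 : ℤ) (p - 1), f m = ∏ a ∈ univ.erase 0, f a := by
  have hp : 0 < p := Nat.pos_of_neZero p
  refine prod_nbij' (fun m => (m : ZMod p)) (fun a => (a.val : ℤ)) ?_ ?_ ?_ ?_ (fun _ _ => rfl)
  · intro m hm
    simp only [mem_Icc] at hm
    simp only [mem_erase, mem_univ, and_true, Ne, intCast_zmod_eq_zero_iff_dvd]
    exact fun hdvd => by have := Int.le_of_dvd (by omega) hdvd; omega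
  · intro a ha
    have hlt := val_lt a
    have hne : a.val ≠ 0 := by simpa [val_eq_zero] using ha
    simp only [mem_Icc]
    omega
  · intro m hm
    simp only [mem_Icc] at hm
    simp only [val_intCast]
    exact Int.emod_eq_of_lt (by omega) (by omega)
  · intro a _
    simp

variable {p : ℕ} [Fact p.Prime]

theorem prod_erase_zero_X_sub_C : ∏ a ∈ univ.erase (0 : ZMod p), (X - C a) = X ^ (p - 1) - 1 := by
  have hp : 1 ≤ p := (Fact.out : p.Prime).one_lt.le
  apply mul_left_cancel₀ (X_ne_zero (R := ZMod p))
  calc X * ∏ a ∈ univ.erase (0 : ZMod p), (X - C a)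
      = ∏ a : ZMod p, (X - C a) := by rw [← mul_prod_erase univ _ (mem_univ 0), C_0, sub_zero]
    _ = X * (X ^ (p - 1) - 1) := by
      rw [FiniteField.prod_univ_X_sub_C, card, mul_sub, mul_one, ← pow_succ', Nat.sub_add_cancel hp]

section
variable {R : Type*} [CommRing R] [Algebra (ZMod p) R]

theorem prod_X_sub_C_algebraMap :
    ∏ a : ZMod p, (X - C (algebraMap (ZMod p) R a)) = X ^ p - X := by
  simpa [Polynomial.map_prod] using
    congrArg (Polynomial.map (algebraMap (ZMod p) R)) (FiniteField.prod_univ_X_sub_C (ZMod p))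

theorem prod_erase_zero_X_sub_C_algebraMap :
    ∏ a ∈ univ.erase 0, (X - C (algebraMap (ZMod p) R a)) = X ^ (p - 1) - 1 := by
  simpa [Polynomial.map_prod] using
    congrArg (Polynomial.map (algebraMap (ZMod p) R)) (prod_erase_zero_X_sub_C (p := p))

end

end ZMod

theorem Finset.prod_erase_zero_mul_left {G₀ M : Type*} [GroupWithZero G₀] [Fintype G₀]
    [DecidableEq G₀] [CommMonoid M] {c : G₀} (hc : c ≠ 0) (g : G₀ → M) :
    ∏ a ∈ univ.erase 0, g (c * a) = ∏ a ∈ univ.erase 0, g a :=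
  prod_equiv (Equiv.mulLeft₀ c hc) (by simp [hc]) (fun _ _ => rfl)

section
variable {p : ℕ} [Fact p.Prime] {K : Type*} [Field K] [Algebra (ZMod p) K]

local notation "φ" => algebraMap (ZMod p) K

theorem prod_X_sub_C_algebraMap_mul {s : K} (hs : s ≠ 0) (hsp : s ^ p = -s) :
    ∏ b : ZMod p, (X - C (φ b * s)) = X ^ p + X := by
  have hscale (c : K) : X - C (c * s) = C s * (C s⁻¹ * X - C c) := by
    rw [mul_sub, ← mul_assoc, ← C_mul, mul_inv_cancel₀ hs, C_1, one_mul, ← C_mul, mul_comm]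
  have hunit : C (-s) * C (-s)⁻¹ = (1 : K[X]) := by
    rw [← C_mul, mul_inv_cancel₀ (neg_ne_zero.2 hs), C_1]
  have hneg : C (-s) * C s⁻¹ = (-1 : K[X]) := by
    rw [← C_mul, neg_mul, mul_inv_cancel₀ hs, C_neg, C_1]
  calc ∏ b : ZMod p, (X - C (φ b * s))
      = C s ^ p * (∏ b : ZMod p, (X - C (φ b))).comp (C s⁻¹ * X) := by
        simp only [hscale, prod_mul_distrib, prod_const, card_univ, ZMod.card, Polynomial.prod_comp,
          sub_comp, X_comp, C_comp]
    _ = C (-s) * (C (-s)⁻¹ * X ^ p - C s⁻¹ * X) := by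
        rw [ZMod.prod_X_sub_C_algebraMap, sub_comp, X_pow_comp, X_comp, mul_pow, ← C_pow,
          ← C_pow, inv_pow, hsp]
    _ = X ^ p + X := by linear_combination X ^ p * hunit - X * hneg

theorem prod_X_sub_C_algebraMap_add_mul {s : K} (hs : s ≠ 0) (hsp : s ^ p = -s) (a : ZMod p) :
    ∏ b : ZMod p, (X - C (φ a + φ b * s)) = X ^ p + X - C (φ (2 * a)) := by
  have : CharP K p := (Algebra.charP_iff (ZMod p) K p).mp inferInstance
  have hshift : ∏ b : ZMod p, (X - C (φ a + φ b * s)) =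
      (∏ b : ZMod p, (X - C (φ b * s))).comp (X - C (φ a)) := by
    simp only [Polynomial.prod_comp, sub_comp, X_comp, C_comp, C_add]
    exact prod_congr rfl fun _ _ => by ring
  rw [hshift, prod_X_sub_C_algebraMap_mul hs hsp, add_comp, X_pow_comp, X_comp, sub_pow_char,
    ← C_pow, ← map_pow, ZMod.pow_card, map_mul, map_ofNat, C_mul, C_ofNat]
  ring

theorem X_pow_sub_one_mul_prod_prod_X_sub_C (hp : p ≠ 2) {s : K} (hs : s ≠ 0)
    (hsp : s ^ p = -s) :
    (X ^ (p - 1) - 1) * ∏ a ∈ univ.erase 0, ∏ b ∈ univ.erase 0, (X - C (φ a + φ b * s)) =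
      (X ^ p + X) ^ (p - 1) - 1 := by
  have h2 : (2 : ZMod p) ≠ 0 := Ring.two_ne_zero (by rwa [ZMod.ringChar_zmod_n])
  calc (X ^ (p - 1) - 1) * ∏ a ∈ univ.erase 0, ∏ b ∈ univ.erase 0, (X - C (φ a + φ b * s))
      = ∏ a ∈ univ.erase 0, ((X - C (φ a)) * ∏ b ∈ univ.erase 0, (X - C (φ a + φ b * s))) := by
        rw [← ZMod.prod_erase_zero_X_sub_C_algebraMap, prod_mul_distrib]
    _ = ∏ a ∈ univ.erase 0, (X ^ p + X - C (φ (2 * a))) := by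
        refine prod_congr rfl fun a _ => ?_
        rw [← prod_X_sub_C_algebraMap_add_mul hs hsp a, ← mul_prod_erase univ _ (mem_univ 0)]
        simp
    _ = ∏ a ∈ univ.erase 0, (X ^ p + X - C (φ a)) :=
        prod_erase_zero_mul_left h2 fun a => X ^ p + X - C (φ a)
    _ = (X ^ p + X) ^ (p - 1) - 1 := by
        have h := congrArg (·.comp (X ^ p + X)) (ZMod.prod_erase_zero_X_sub_C_algebraMap (p := p) (R := K))
        simpa only [Polynomial.prod_comp, sub_comp, X_comp, C_comp, pow_comp, one_comp] using h

theorem pow_char_eq_neg_of_mul_self_eq (hodd : Odd p) {d : ℤ} (hleg : legendreSym p d = -1)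
    {s : K} (hs : s * s = d) : s ^ p = -s := by
  have heuler : (d : K) ^ (p / 2) = -1 := by
    simpa [hleg] using (congrArg φ (legendreSym.eq_pow p d)).symm
  rw [← Nat.two_mul_div_two_add_one_of_odd hodd, pow_succ, pow_mul, sq, hs, heuler, neg_one_mul]

theorem Zsqrtd.dvd_of_lift_eq_zero {d : ℤ} (hd : ¬IsSquare (d : ZMod p)) {s : K}
    (hs : s * s = d) {z : ℤ√d} (hz : Zsqrtd.lift ⟨s, hs⟩ z = 0) : (p : ℤ√d) ∣ z := by
  have hφ := (φ).injective
  rw [Zsqrtd.lift_apply_apply, ← map_intCast φ, ← map_intCast φ] at hz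
  have him : (z.im : ZMod p) = 0 := by
    by_contra him
    have hsφ : s = φ (-z.re / z.im) := by
      rw [map_div₀, map_neg, eq_div_iff ((map_ne_zero φ).2 him)]
      linear_combination hz
    exact hd ⟨-z.re / z.im, hφ (by rw [map_mul, ← hsφ, hs, map_intCast])⟩
  have hre : (z.re : ZMod p) = 0 := hφ (by simpa [him] using hz)
  rw [← Int.cast_natCast, Zsqrtd.intCast_dvd, ← ZMod.intCast_zmod_eq_zero_iff_dvd,
    ← ZMod.intCast_zmod_eq_zero_iff_dvd]
  exact ⟨hre, him⟩

theorem Zsqrtd.dvd_of_map_lift_eq_zero {d : ℤ} (hd : ¬IsSquare (d : ZMod p)) {s : K}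
    (hs : s * s = d) {f : (ℤ√d)[X]} (hf : f.map (Zsqrtd.lift ⟨s, hs⟩) = 0) :
    (p : (ℤ√d)[X]) ∣ f := by
  rw [← C_eq_natCast, C_dvd_iff_dvd_coeff]
  exact fun i => dvd_of_lift_eq_zero hd hs (by rw [← coeff_map, hf, coeff_zero])

end

theorem stmt_5 (p : ℕ) [Fact p.Prime] (hodd : Odd p) (d : ℤ) (hd : ¬ (p : ℤ) ∣ d)
    (hleg : legendreSym p d = -1) :
    (p : (Zsqrtd d)[X]) ∣
      (X ^ (p - 1) - 1) *
        (∏ m ∈ Finset.Icc (1 : ℤ) ((p : ℤ) - 1), ∏ n ∈ Finset.Icc (1 : ℤ) ((p : ℤ) - 1),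
          (X - C (⟨m, n⟩ : Zsqrtd d)))
      - ((X ^ p + X) ^ (p - 1) - 1) := by
  let K := AlgebraicClosure (ZMod p)
  obtain ⟨s, hs⟩ := IsAlgClosed.exists_eq_mul_self (d : K)
  have hs0 : s ≠ 0 := by
    rintro rfl
    exact hd ((CharP.intCast_eq_zero_iff K p d).1 (by simpa using hs))
  have hp2 : p ≠ 2 := by
    rintro rfl
    exact Nat.not_even_iff_odd.2 hodd even_two
  have key := X_pow_sub_one_mul_prod_prod_X_sub_C hp2 hs0
    (pow_char_eq_neg_of_mul_self_eq hodd hleg hs.symm)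
  simp only [← ZMod.prod_Icc_intCast, map_intCast] at key
  refine Zsqrtd.dvd_of_map_lift_eq_zero ((legendreSym.eq_neg_one_iff p).1 hleg) hs.symm ?_
  simp only [Polynomial.map_sub, Polynomial.map_mul, Polynomial.map_pow, Polynomial.map_add,
    Polynomial.map_one, Polynomial.map_X, Polynomial.map_prod, Polynomial.map_C,
    Zsqrtd.lift_apply_apply]
  exact sub_eq_zero.2 key
end

section
/- Let p be an odd prime and d an integer with p ∤ d. Then in ℤ[√d][X] one has ∏_{m=1}^{p−1} ∏_{n=1}^{p−1} (x − (m + n√d)) ≡ (1/(x^{p−1}−1)) · ∏_{m=1}^{p−1} (x^p − (d/p)·x − (1 − (d/p))·m) (mod p); equivalently, (x^{p−1} − 1) · ∏_{m=1}^{p−1} ∏_{n=1}^{p−1} (x − (m + n√d)) ≡ ∏_{m=1}^{p−1} (x^p − (d/p)·x − (1 − (d/p))·m) (mod p), where (d/p) ∈ {1, −1} is the Legendre symbol. -/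
open Polynomial Finset



section Aux
variable (p : ℕ) [hFp : Fact p.Prime]

lemma aux_prod_univ : (∏ a : ZMod p, ((X : (ZMod p)[X]) - C a)) = X ^ p - X := by
  have hp := hFp.out
  have h1 : 1 < p := hp.one_lt
  have hcard : Fintype.card (ZMod p) = p := ZMod.card p
  have hroots := FiniteField.roots_X_pow_card_sub_X (ZMod p)
  rw [hcard] at hroots
  have hmonic : (X ^ p - X : (ZMod p)[X]).Monic := by
    apply (monic_X_pow p).sub_of_left
    rw [degree_X, degree_X_pow]
    exact_mod_cast h1
  have hdeg : (X ^ p - X : (ZMod p)[X]).natDegree = p :=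
    FiniteField.X_pow_card_sub_X_natDegree_eq _ h1
  have := Polynomial.prod_multiset_X_sub_C_of_monic_of_roots_card_eq hmonic
    (by rw [hroots, hdeg]; simp [hcard])
  rw [hroots] at this
  rw [← this]
  rw [Finset.prod_eq_multiset_prod]

lemma aux_prod_ne_zero :
    (∏ a ∈ (Finset.univ : Finset (ZMod p)).erase 0, ((X : (ZMod p)[X]) - C a))
      = X ^ (p - 1) - 1 := by
  have hp := hFp.out
  have h1 : 1 < p := hp.one_lt
  have hfull := aux_prod_univ p
  have hsplit : (∏ a : ZMod p, ((X : (ZMod p)[X]) - C a)) =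
      (X - C 0) * ∏ a ∈ (Finset.univ : Finset (ZMod p)).erase 0, (X - C a) := by
    rw [← Finset.prod_erase_mul _ _ (Finset.mem_univ (0 : ZMod p))]
    ring
  have hX : (X : (ZMod p)[X]) ≠ 0 := X_ne_zero
  apply mul_left_cancel₀ hX
  rw [← sub_eq_zero]
  have hXp : (X : (ZMod p)[X]) * X ^ (p-1) = X ^ p := by
    rw [← pow_succ']
    congr 1
    omega
  have : (X : (ZMod p)[X]) * (X ^ (p-1) - 1) = X ^ p - X := by
    rw [mul_sub, hXp, mul_one]
  rw [this, ← hfull, hsplit]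
  simp

end Aux

section Reindex
variable (p : ℕ) [hFp : Fact p.Prime]

lemma aux_reindex_all {β : Type*} [CommMonoid β] (F : ZMod p → β) :
    ∏ n ∈ Finset.Icc (0:ℤ) ((p:ℤ)-1), F ((n : ZMod p)) = ∏ a : ZMod p, F a := by
  haveI : NeZero p := ⟨hFp.out.ne_zero⟩
  refine Finset.prod_nbij' (fun n => (n : ZMod p)) (fun a => (a.val : ℤ)) ?_ ?_ ?_ ?_ ?_
  · intro n _; exact Finset.mem_univ _
  · intro a _
    have := ZMod.val_lt a
    simp only [Finset.mem_Icc]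
    omega
  · intro n hn
    simp only [Finset.mem_Icc] at hn
    have h0 : n = ((n.toNat : ℕ) : ℤ) := by omega
    have hlt : n.toNat < p := by omega
    rw [h0]
    show ((((n.toNat : ℤ) : ZMod p)).val : ℤ) = ((n.toNat : ℕ) : ℤ)
    rw [Int.cast_natCast, ZMod.val_natCast_of_lt hlt]
  · intro a _
    simp [ZMod.natCast_val, ZMod.cast_id]
  · intro n _; rfl

lemma aux_reindex_ne {β : Type*} [CommMonoid β] (F : ZMod p → β) :
    ∏ n ∈ Finset.Icc (1:ℤ) ((p:ℤ)-1), F ((n : ZMod p))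
      = ∏ a ∈ (Finset.univ : Finset (ZMod p)).erase 0, F a := by
  haveI : NeZero p := ⟨hFp.out.ne_zero⟩
  refine Finset.prod_nbij' (fun n => (n : ZMod p)) (fun a => (a.val : ℤ)) ?_ ?_ ?_ ?_ ?_
  · intro n hn
    simp only [Finset.mem_Icc] at hn
    refine Finset.mem_erase.mpr ⟨?_, Finset.mem_univ _⟩
    intro h0
    rw [ZMod.intCast_zmod_eq_zero_iff_dvd] at h0
    obtain ⟨k, hk⟩ := h0
    have hp1 : 1 < (p:ℤ) := by exact_mod_cast hFp.out.one_lt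
    rcases le_or_gt k 0 with hk0 | hk0
    · nlinarith
    · nlinarith
  · intro a ha
    have := ZMod.val_lt a
    have h0 : a.val ≠ 0 := by
      simp only [Finset.mem_erase] at ha
      simpa [ZMod.val_eq_zero] using ha.1
    simp only [Finset.mem_Icc]
    omega
  · intro n hn
    simp only [Finset.mem_Icc] at hn
    have h0 : n = ((n.toNat : ℕ) : ℤ) := by omega
    have hlt : n.toNat < p := by omega
    rw [h0]
    show ((((n.toNat : ℤ) : ZMod p)).val : ℤ) = ((n.toNat : ℕ) : ℤ)
    rw [Int.cast_natCast, ZMod.val_natCast_of_lt hlt]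
  · intro a _
    simp [ZMod.natCast_val, ZMod.cast_id]
  · intro n _; rfl

end Reindex

set_option maxHeartbeats 1000000 in
set_option synthInstance.maxHeartbeats 400000 in
theorem stmt_13 (p : ℕ) [Fact p.Prime] (hodd : Odd p) (d : ℤ) (hd : ¬ (p : ℤ) ∣ d) :
    (p : (Zsqrtd d)[X]) ∣
      (X ^ (p - 1) - 1) *
        (∏ m ∈ Finset.Icc (1 : ℤ) ((p : ℤ) - 1), ∏ n ∈ Finset.Icc (1 : ℤ) ((p : ℤ) - 1),
          (X - C (⟨m, n⟩ : Zsqrtd d)))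
      - ∏ m ∈ Finset.Icc (1 : ℤ) ((p : ℤ) - 1),
          (X ^ p - C ((legendreSym p d : ℤ) : Zsqrtd d) * X
            - C (((1 - legendreSym p d) * m : ℤ) : Zsqrtd d)) := by
  classical
  have hp := (Fact.out : p.Prime)
  haveI : NeZero p := ⟨hp.ne_zero⟩
  set I : Ideal (Zsqrtd d) := Ideal.span {((p : ℕ) : Zsqrtd d)} with hIdef
  set S := Zsqrtd d ⧸ I with hSdef
  set φ : Zsqrtd d →+* S := Ideal.Quotient.mk I with hφdef
  -- reduction to the quotient
  have key : ∀ f : (Zsqrtd d)[X], Polynomial.map φ f = 0 → (p : (Zsqrtd d)[X]) ∣ f := by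
    intro f hf
    have : (C ((p : ℕ) : Zsqrtd d)) ∣ f := by
      rw [Polynomial.C_dvd_iff_dvd_coeff]
      intro i
      rw [← Ideal.mem_span_singleton (α := Zsqrtd d), ← hIdef,
        ← Ideal.Quotient.eq_zero_iff_mem]
      have := congrArg (fun g => Polynomial.coeff g i) hf
      simpa [Polynomial.coeff_map] using this
    rwa [Polynomial.C_eq_natCast] at this
  -- characteristic p
  have hp0 : ((p : ℕ) : S) = 0 := by
    rw [← map_natCast φ, hφdef, Ideal.Quotient.eq_zero_iff_mem, hIdef]
    exact Ideal.mem_span_singleton_self _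
  haveI hcharS : CharP S p := by
    constructor
    intro n
    constructor
    · intro h
      have hmem : ((n : ℕ) : Zsqrtd d) ∈ I := by
        rw [← Ideal.Quotient.eq_zero_iff_mem]
        rw [show Ideal.Quotient.mk I ((n : ℕ) : Zsqrtd d) = φ ((n : ℕ) : Zsqrtd d) from rfl]
        rw [map_natCast φ]
        exact h
      rw [hIdef, Ideal.mem_span_singleton] at hmem
      obtain ⟨z, hz⟩ := hmem
      have hre : (n : ℤ) = (p : ℤ) * z.re := by
        have := congrArg Zsqrtd.re hz
        simpa [Zsqrtd.re_mul] using this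
      exact_mod_cast (Int.natCast_dvd_natCast (m := p) (n := n)).mp ⟨z.re, hre⟩
    · rintro ⟨k, rfl⟩
      push_cast
      exact (Nat.cast_mul (α := S) p k).trans (by rw [hp0, zero_mul] : (p : S) * (k : S) = 0)
  set χ : ZMod p →+* S := ZMod.castHom (dvd_refl p) S with hχdef
  have hχint : ∀ m : ℤ, χ ((m : ZMod p)) = ((m : ℤ) : S) := fun m => map_intCast χ m
  set ω : S := φ Zsqrtd.sqrtd with hωdef
  have hω2 : ω * ω = ((d : ℤ) : S) := by
    rw [hωdef, ← map_mul, Zsqrtd.dmuld, map_intCast]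
  have hd0 : (d : ZMod p) ≠ 0 := by
    rw [Ne, ZMod.intCast_zmod_eq_zero_iff_dvd]
    exact hd
  set ω' : S := χ ((d : ZMod p)⁻¹) * ω with hω'def
  have hωω' : ω * ω' = 1 := by
    rw [hω'def, mul_left_comm, hω2, ← hχint d, ← map_mul, inv_mul_cancel₀ hd0, map_one]
  set e : S := ((legendreSym p d : ℤ) : S) with hedef
  have hev : ω ^ (p - 1) = e := by
    have hps : p - 1 = 2 * (p / 2) := by
      obtain ⟨k, hk⟩ := hodd
      omega
    rw [hps, pow_mul, sq, hω2, ← hχint d, ← map_pow, ← legendreSym.eq_pow, hχint]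
  have frobZ : ∀ m : ℤ, ((m : ℤ) : S) ^ p = ((m : ℤ) : S) := by
    intro m
    rw [← hχint m, ← map_pow, ZMod.pow_card]
  -- the key per-residue identity
  have H : ∀ m : ℤ, (∏ a : ZMod p, ((X : S[X]) - C ((m : ℤ) : S) - C (χ a) * C ω))
      = X ^ p - C e * X - C (((1 - (legendreSym p d : ℤ)) * m : ℤ) : S) := by
    intro m
    set c : S := ((m : ℤ) : S) with hcdef
    have base : (∏ a : ZMod p, ((X : S[X]) - C (χ a))) = X ^ p - X := by
      have h0 := aux_prod_univ p
      have := congrArg (Polynomial.map χ) h0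
      simpa [Polynomial.map_prod, Polynomial.map_sub, Polynomial.map_pow,
        Polynomial.map_X, Polynomial.map_C] using this
    set q : S[X] := C ω' * (X - C c) with hqdef
    have hCωq : C ω * q = X - C c := by
      rw [hqdef, ← mul_assoc, ← C_mul, hωω', map_one, one_mul]
    have hcomp : (∏ a : ZMod p, (q - C (χ a))) = q ^ p - q := by
      have := congrArg (fun f : S[X] => f.comp q) base
      simpa [Polynomial.prod_comp, Polynomial.sub_comp, Polynomial.X_comp,
        Polynomial.C_comp, Polynomial.pow_comp] using this
    have hfac : ∀ a : ZMod p, (X : S[X]) - C c - C (χ a) * C ω = C ω * (q - C (χ a)) := by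
      intro a
      rw [mul_sub, hCωq]
      ring
    calc ∏ a : ZMod p, ((X : S[X]) - C c - C (χ a) * C ω)
        = ∏ a : ZMod p, (C ω * (q - C (χ a))) := Finset.prod_congr rfl fun a _ => hfac a
      _ = C ω ^ p * ∏ a : ZMod p, (q - C (χ a)) := by
          rw [Finset.prod_mul_distrib, Finset.prod_const, Finset.card_univ, ZMod.card]
      _ = C ω ^ p * (q ^ p - q) := by rw [hcomp]
      _ = (C ω * q) ^ p - C (ω ^ (p - 1)) * (C ω * q) := by
          have hpow : (C ω : S[X]) ^ p = C (ω ^ (p - 1)) * C ω := by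
            rw [← C_pow, ← C_mul, ← pow_succ, Nat.sub_add_cancel hp.one_lt.le]
          rw [mul_sub, ← mul_pow, hpow]
          ring
      _ = (X - C c) ^ p - C e * (X - C c) := by rw [hCωq, hev]
      _ = X ^ p - C e * X - C (((1 - (legendreSym p d : ℤ)) * m : ℤ) : S) := by
          rw [sub_pow_char, ← C_pow, hcdef, frobZ m]
          have hC : ((((1 - (legendreSym p d : ℤ)) * m : ℤ)) : S) = c - e * c := by
            rw [hcdef, hedef]
            push_cast
            ring
          rw [hC, C_sub, C_mul]
          ring
  -- decomposition of the quotient elements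
  have hsplitm : ∀ m n : ℤ, (φ (⟨m, n⟩ : Zsqrtd d)) = ((m : ℤ) : S) + ((n : ℤ) : S) * ω := by
    intro m n
    rw [Zsqrtd.decompose, map_add, map_mul, map_intCast, map_intCast, hωdef]
    ring
  -- inner product identity
  have hins : Finset.Icc (0:ℤ) ((p:ℤ)-1) = insert 0 (Finset.Icc (1:ℤ) ((p:ℤ)-1)) := by
    ext x
    simp only [Finset.mem_Icc, Finset.mem_insert]
    constructor
    · rintro ⟨h1, h2⟩
      rcases eq_or_lt_of_le h1 with h | h
      · exact Or.inl h.symm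
      · exact Or.inr ⟨h, h2⟩
    · rintro (rfl | ⟨h1, h2⟩)
      · have : (1:ℤ) ≤ (p:ℤ) := by exact_mod_cast hp.one_lt.le
        exact ⟨le_refl 0, by linarith⟩
      · exact ⟨by linarith, h2⟩
  have hinner : ∀ m : ℤ, ((X : S[X]) - C ((m : ℤ) : S)) *
      ∏ n ∈ Finset.Icc (1:ℤ) ((p:ℤ)-1), ((X : S[X]) - C (φ (⟨m, n⟩ : Zsqrtd d)))
      = X ^ p - C e * X - C (((1 - (legendreSym p d : ℤ)) * m : ℤ) : S) := by
    intro m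
    have hterm : ∀ n : ℤ, (X : S[X]) - C (φ (⟨m, n⟩ : Zsqrtd d))
        = X - C ((m : ℤ) : S) - C (χ ((n : ZMod p))) * C ω := by
      intro n
      rw [hsplitm m n, hχint n, C_add, C_mul]
      ring
    have hstep : (∏ n ∈ Finset.Icc (0:ℤ) ((p:ℤ)-1),
          ((X : S[X]) - C ((m : ℤ) : S) - C (χ ((n : ZMod p))) * C ω))
        = ((X : S[X]) - C ((m : ℤ) : S)) * ∏ n ∈ Finset.Icc (1:ℤ) ((p:ℤ)-1),
          ((X : S[X]) - C ((m : ℤ) : S) - C (χ ((n : ZMod p))) * C ω) := by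
      rw [hins, Finset.prod_insert (by simp : (0:ℤ) ∉ Finset.Icc (1:ℤ) ((p:ℤ)-1))]
      congr 1
      simp
    rw [Finset.prod_congr rfl fun n _ => hterm n, ← hstep]
    rw [aux_reindex_all p (fun a => (X : S[X]) - C ((m : ℤ) : S) - C (χ a) * C ω)]
    exact H m
  -- outer factor identity
  have houter : ((X : S[X]) ^ (p - 1) - 1)
      = ∏ m ∈ Finset.Icc (1:ℤ) ((p:ℤ)-1), ((X : S[X]) - C ((m : ℤ) : S)) := by
    have h0 := aux_prod_ne_zero p
    have h1 := congrArg (Polynomial.map χ) h0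
    simp only [Polynomial.map_prod, Polynomial.map_sub, Polynomial.map_pow,
      Polynomial.map_X, Polynomial.map_C, Polynomial.map_one] at h1
    rw [← h1, ← aux_reindex_ne p (fun a => (X : S[X]) - C (χ a))]
    exact Finset.prod_congr rfl fun n _ => by rw [hχint n]
  -- conclude
  apply key
  rw [Polynomial.map_sub, sub_eq_zero, Polynomial.map_mul, Polynomial.map_sub,
    Polynomial.map_pow, Polynomial.map_one, Polynomial.map_X, Polynomial.map_prod]
  simp only [Polynomial.map_prod, Polynomial.map_sub, Polynomial.map_mul,
    Polynomial.map_pow, Polynomial.map_X, Polynomial.map_C, map_intCast]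
  rw [houter, ← Finset.prod_mul_distrib]
  refine Finset.prod_congr rfl fun m hm => ?_
  rw [hinner m, hedef]
  simp [Polynomial.C_eq_intCast]
end
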